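/- Let G be a normed Abelian group with nonbranching optimal transport plans. If g, h ∈ G are indecomposable elements generating distinct cyclic subgroups ⟨g⟩ ≠ ⟨h⟩, then |kg + lh| = |kg| + |lh| for all integers k, l. -/

import Mathlib

def IsGroupNorm {G : Type*} [AddCommGroup G] (ν : G → ℝ) : Prop :=
  (∀ g, 0 ≤ ν g) ∧ (∀ g h, ν (g + h) ≤ ν g + ν h) ∧
  (∀ g, ν (-g) = ν g) ∧ (∀ g, ν g = 0 ↔ g = 0)

def HasNBP {G : Type*} [AddCommGroup G] (ν : G → ℝ) : Prop :=
  ∀ (n : ℕ) (g : Fin n → G), (∑ i, g i) = 0 →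
    ∃ f : Fin n → Fin n → G,
      (∀ i j, f i j = - f j i) ∧ (∀ i, f i i = 0) ∧
      (∀ i, g i = ∑ j, f i j) ∧ (∀ i, ν (g i) = ∑ j, ν (f i j))

def HasCZT {G : Type*} [AddCommGroup G] (ν : G → ℝ) : Prop :=
  ∀ a b c : G, a + b + c = 0 →
    ν a + ν b = ν c ∨ ν a + ν c = ν b ∨ ν b + ν c = ν a

def IsIndecomposable {G : Type*} [AddCommGroup G] (ν : G → ℝ) (g : G) : Prop :=
  ∀ h : G, ν h + ν (g - h) = ν g → h = 0 ∨ h = g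

/-!
Transport `k • g` and `l • h` to `-(k • g + l • h)` along a nonbranching plan, and let `u` be
what is shipped directly from `k • g` to `l • h`. Then `u` lies on a geodesic from `0` to
`k • g`, `-u` on one from `0` to `l • h`, and `ν (k • g + l • h) = ν (k • g) + ν (l • h) - 2 ν u`.

The heart of the matter is that a point `x` on a geodesic from `0` to `n • g`, `g`
indecomposable, lies in `⟨g⟩`. Transport `x` and `n • g - x` to `n` copies of `-g`:
indecomposability forbids the copies to exchange anything, and counting norms shows that nothing
moves between `x` and `n • g - x`, so that `x` is a sum of shipments `0` or `g`, and that
`ν (n • g) = n ν g` when `2 g ≠ 0` (when `2 g = 0`, `⟨g⟩ = {0, g}` and all is immediate). So if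
`u ≠ 0`, one of `± g` lies on a geodesic from `0` to `u`, hence from `0` to `l • h`, and
`g ∈ ⟨h⟩`; symmetrically `h ∈ ⟨g⟩`.
-/

section

variable {G : Type*} [AddCommGroup G] {ν : G → ℝ}

namespace IsGroupNorm

lemma nonneg (hν : IsGroupNorm ν) (x : G) : 0 ≤ ν x := hν.1 x

lemma map_add_le (hν : IsGroupNorm ν) (x y : G) : ν (x + y) ≤ ν x + ν y := hν.2.1 x y

lemma map_neg (hν : IsGroupNorm ν) (x : G) : ν (-x) = ν x := hν.2.2.1 x

lemma eq_zero_iff (hν : IsGroupNorm ν) {x : G} : ν x = 0 ↔ x = 0 := hν.2.2.2 x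

lemma map_zero (hν : IsGroupNorm ν) : ν 0 = 0 := hν.eq_zero_iff.2 rfl

lemma le_add_sub (hν : IsGroupNorm ν) (x z : G) : ν z ≤ ν x + ν (z - x) := by
  simpa using hν.map_add_le x (z - x)

lemma map_sum_le (hν : IsGroupNorm ν) {ι : Type*} (s : Finset ι) (F : ι → G) :
    ν (∑ i ∈ s, F i) ≤ ∑ i ∈ s, ν (F i) :=
  Finset.le_sum_of_subadditive ν hν.map_zero.le hν.map_add_le s F

lemma map_nsmul_le (hν : IsGroupNorm ν) (n : ℕ) (x : G) : ν (n • x) ≤ n * ν x := by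
  simpa using hν.map_sum_le (Finset.range n) fun _ => x

lemma norm_add_norm_sub_trans (hν : IsGroupNorm ν) {x y z : G} (hxy : ν x + ν (y - x) = ν y)
    (hyz : ν y + ν (z - y) = ν z) : ν x + ν (z - x) = ν z := by
  have := hν.map_add_le (y - x) (z - y)
  rw [sub_add_sub_cancel'] at this
  linarith [hν.le_add_sub x z]

end IsGroupNorm

namespace IsIndecomposable

lemma neg (hν : IsGroupNorm ν) {g : G} (hg : IsIndecomposable ν g) :
    IsIndecomposable ν (-g) := by
  intro x hx
  have : ν (-x) + ν (g - -x) = ν g := by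
    rwa [hν.map_neg, show g - -x = -(-g - x) by abel, hν.map_neg, ← hν.map_neg g]
  rcases hg (-x) this with h | h
  · exact .inl (neg_eq_zero.1 h)
  · exact .inr (neg_eq_iff_eq_neg.1 h)

lemma eq_zero_or_eq_of_sum (hν : IsGroupNorm ν) {g : G} (hg : IsIndecomposable ν g)
    {ι : Type*} [Fintype ι] {F : ι → G} (hsum : g = ∑ j, F j) (hnorm : ν g = ∑ j, ν (F j))
    (j : ι) : F j = 0 ∨ F j = g := by
  classical
  apply hg
  have hrest : g - F j = ∑ i ∈ Finset.univ.erase j, F i := by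
    rw [hsum, Finset.sum_erase_eq_sub (Finset.mem_univ j)]
  have hle : ν (g - F j) ≤ ν g - ν (F j) := by
    rw [hrest, hnorm, ← Finset.sum_erase_eq_sub (Finset.mem_univ j)]
    exact hν.map_sum_le _ _
  linarith [hν.le_add_sub (F j) g]

end IsIndecomposable

structure IsOptimalPlan {ι : Type*} [Fintype ι] (ν : G → ℝ) (T : ι → G) (f : ι → ι → G) :
    Prop where
  antisymm : ∀ i j, f i j = -f j i
  diag : ∀ i, f i i = 0
  sum_eq : ∀ i, T i = ∑ j, f i j
  norm_eq : ∀ i, ν (T i) = ∑ j, ν (f i j)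

lemma HasNBP.exists_isOptimalPlan (hNBP : HasNBP ν) {n : ℕ} (T : Fin n → G)
    (hT : ∑ i, T i = 0) : ∃ f, IsOptimalPlan ν T f := by
  obtain ⟨f, h₁, h₂, h₃, h₄⟩ := hNBP n T hT
  exact ⟨f, h₁, h₂, h₃, h₄⟩

namespace IsOptimalPlan

variable {ι : Type*} [Fintype ι] {T : ι → G} {f : ι → ι → G}

lemma eq_zero_or_eq_of_indecomposable (hν : IsGroupNorm ν) (hf : IsOptimalPlan ν T f)
    {i : ι} (hi : IsIndecomposable ν (T i)) (j : ι) : f i j = 0 ∨ f i j = T i :=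
  hi.eq_zero_or_eq_of_sum hν (hf.sum_eq i) (hf.norm_eq i) j

/-- A nonzero shipment between the two would be `c` one way and `-c` the other. -/
lemma eq_zero_of_indecomposable (hν : IsGroupNorm ν) (hf : IsOptimalPlan ν T f) {c : G}
    (hc : IsIndecomposable ν c) (h2c : c + c ≠ 0) {i j : ι} (hi : T i = c) (hj : T j = c) :
    f i j = 0 := by
  rcases hf.eq_zero_or_eq_of_indecomposable hν (hi ▸ hc) j with hij | hij
  · exact hij
  rcases hf.eq_zero_or_eq_of_indecomposable hν (hj ▸ hc) i with hji | hji
  · rw [hf.antisymm, hji, neg_zero]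
  · rw [hf.antisymm, hji, hj, hi] at hij
    exact absurd (neg_eq_iff_add_eq_zero.1 hij) h2c

end IsOptimalPlan

lemma exists_nsmul_of_mem_zmultiples {g v : G} (hv : v ∈ AddSubgroup.zmultiples g) :
    ∃ n : ℕ, v = n • g ∨ v = n • -g := by
  obtain ⟨k, rfl⟩ := AddSubgroup.mem_zmultiples_iff.1 hv
  obtain ⟨n, rfl | rfl⟩ := k.eq_nat_or_neg
  · exact ⟨n, .inl (natCast_zsmul g n)⟩
  · exact ⟨n, .inr (by simp)⟩

lemma eq_zero_or_eq_of_mem_zmultiples {g v : G} (h2g : g + g = 0)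
    (hv : v ∈ AddSubgroup.zmultiples g) : v = 0 ∨ v = g := by
  obtain ⟨n, hn⟩ := exists_nsmul_of_mem_zmultiples hv
  rw [neg_eq_of_add_eq_zero_left h2g, or_self] at hn
  obtain ⟨q, rfl | rfl⟩ := n.even_or_odd' <;> simp [hn, add_nsmul, mul_nsmul, two_nsmul, h2g]

namespace IsIndecomposable

variable {g : G}

lemma norm_nsmul_eq_and_mem_zmultiples (hν : IsGroupNorm ν) (hNBP : HasNBP ν)
    (hg : IsIndecomposable ν g) (h2g : g + g ≠ 0) (n : ℕ) {x : G}
    (hx : ν x + ν (n • g - x) = ν (n • g)) :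
    ν (n • g) = n * ν g ∧ x ∈ AddSubgroup.zmultiples g := by
  set T : Fin (n + 2) → G := Fin.cons x (Fin.cons (n • g - x) fun _ => -g)
  have hT : ∀ i : Fin n, T i.succ.succ = -g := fun i => rfl
  obtain ⟨f, hf⟩ := hNBP.exists_isOptimalPlan T (by simp [T, Fin.sum_univ_succ]; abel)
  have hblock (i j : Fin n) : f i.succ.succ j.succ.succ = 0 :=
    hf.eq_zero_of_indecomposable hν (hg.neg hν) (by rwa [← neg_add, neg_ne_zero]) (hT i) (hT j)
  have hnorm_row (i : Fin n) : ν (f i.succ.succ 0) + ν (f i.succ.succ 1) = ν g := by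
    simpa [Fin.sum_univ_succ, hblock, hν.map_zero, hν.map_neg, T]
      using (hf.norm_eq i.succ.succ).symm
  have hnorm0 : ν x = ν (f 0 1) + ∑ i : Fin n, ν (f i.succ.succ 0) := by
    simpa [Fin.sum_univ_succ, hf.diag, hν.map_zero, hν.map_neg, T,
      fun i : Fin n => hf.antisymm 0 i.succ.succ] using hf.norm_eq 0
  have hnorm1 : ν (n • g - x) = ν (f 0 1) + ∑ i : Fin n, ν (f i.succ.succ 1) := by
    simpa [Fin.sum_univ_succ, hf.diag, hν.map_zero, hν.map_neg, T, hf.antisymm 1 0,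
      fun i : Fin n => hf.antisymm 1 i.succ.succ] using hf.norm_eq 1
  have hrow0 : x = f 0 1 + ∑ i : Fin n, -f i.succ.succ 0 := by
    simpa [Fin.sum_univ_succ, hf.diag, T, fun i : Fin n => hf.antisymm 0 i.succ.succ]
      using hf.sum_eq 0
  have hsum : ∑ i : Fin n, (ν (f i.succ.succ 0) + ν (f i.succ.succ 1)) = n * ν g := by
    simp [hnorm_row]
  rw [Finset.sum_add_distrib] at hsum
  have h01 : ν (f 0 1) = 0 := by
    linarith [hν.nonneg (f 0 1), hν.map_nsmul_le n g]
  refine ⟨by linarith [hν.map_nsmul_le n g], ?_⟩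
  rw [hrow0, hν.eq_zero_iff.1 h01, zero_add]
  refine AddSubgroup.sum_mem _ fun i _ => ?_
  rcases hf.eq_zero_or_eq_of_indecomposable hν ((hT i).symm ▸ hg.neg hν) 0 with h | h
  · simp [h]
  · simp [h, hT]

lemma norm_nsmul (hν : IsGroupNorm ν) (hNBP : HasNBP ν) (hg : IsIndecomposable ν g)
    (h2g : g + g ≠ 0) (n : ℕ) : ν (n • g) = n * ν g :=
  (hg.norm_nsmul_eq_and_mem_zmultiples hν hNBP h2g n (x := 0) (by simp [hν.map_zero])).1

lemma mem_zmultiples_of_norm_add_norm_sub_eq (hν : IsGroupNorm ν) (hNBP : HasNBP ν)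
    (hg : IsIndecomposable ν g) {x z : G} (hz : z ∈ AddSubgroup.zmultiples g)
    (hx : ν x + ν (z - x) = ν z) : x ∈ AddSubgroup.zmultiples g := by
  by_cases h2g : g + g = 0
  · rcases eq_zero_or_eq_of_mem_zmultiples h2g hz with rfl | rfl
    · rw [zero_sub, hν.map_neg, hν.map_zero] at hx
      have : ν x = 0 := by linarith
      simp [hν.eq_zero_iff.1 this]
    · rcases hg x hx with rfl | rfl
      · exact zero_mem _
      · exact AddSubgroup.mem_zmultiples x
  · obtain ⟨n, rfl | rfl⟩ := exists_nsmul_of_mem_zmultiples hz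
    · exact (hg.norm_nsmul_eq_and_mem_zmultiples hν hNBP h2g n hx).2
    · rw [← AddSubgroup.zmultiples_neg]
      exact ((hg.neg hν).norm_nsmul_eq_and_mem_zmultiples hν hNBP
        (by rwa [← neg_add, neg_ne_zero]) n hx).2

lemma norm_add_norm_succ_nsmul_sub_self (hν : IsGroupNorm ν) (hNBP : HasNBP ν)
    (hg : IsIndecomposable ν g) (h2g : g + g ≠ 0) (m : ℕ) :
    ν g + ν ((m + 1) • g - g) = ν ((m + 1) • g) := by
  rw [succ_nsmul, add_sub_cancel_right, ← succ_nsmul, hg.norm_nsmul hν hNBP h2g,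
    hg.norm_nsmul hν hNBP h2g]
  push_cast
  ring

lemma exists_norm_add_norm_sub_eq (hν : IsGroupNorm ν) (hNBP : HasNBP ν)
    (hg : IsIndecomposable ν g) {v : G} (hv : v ∈ AddSubgroup.zmultiples g) (hv0 : v ≠ 0) :
    ∃ g', (g' = g ∨ g' = -g) ∧ ν g' + ν (v - g') = ν v := by
  by_cases h2g : g + g = 0
  · obtain rfl := (eq_zero_or_eq_of_mem_zmultiples h2g hv).resolve_left hv0
    exact ⟨v, .inl rfl, by simp [hν.map_zero]⟩
  obtain ⟨n, hn⟩ := exists_nsmul_of_mem_zmultiples hv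
  obtain ⟨m, rfl⟩ := Nat.exists_eq_succ_of_ne_zero (n := n) (by rintro rfl; simp_all)
  rcases hn with rfl | rfl
  · exact ⟨g, .inl rfl, hg.norm_add_norm_succ_nsmul_sub_self hν hNBP h2g m⟩
  · exact ⟨-g, .inr rfl, (hg.neg hν).norm_add_norm_succ_nsmul_sub_self hν hNBP
      (by rwa [← neg_add, neg_ne_zero]) m⟩

lemma zmultiples_le_of_norm_add_norm_sub_eq (hν : IsGroupNorm ν) (hNBP : HasNBP ν)
    {h : G} (hg : IsIndecomposable ν g) (hh : IsIndecomposable ν h) {v w : G}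
    (hv : v ∈ AddSubgroup.zmultiples g) (hv0 : v ≠ 0) (hw : w ∈ AddSubgroup.zmultiples h)
    (hvw : ν v + ν (w - v) = ν w) : AddSubgroup.zmultiples g ≤ AddSubgroup.zmultiples h := by
  obtain ⟨g', hg', hg'v⟩ := hg.exists_norm_add_norm_sub_eq hν hNBP hv hv0
  have hg'h := hh.mem_zmultiples_of_norm_add_norm_sub_eq hν hNBP hw
    (hν.norm_add_norm_sub_trans hg'v hvw)
  rw [AddSubgroup.zmultiples_le]
  rcases hg' with rfl | rfl
  · exact hg'h
  · exact neg_mem_iff.1 hg'h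

end IsIndecomposable

lemma HasNBP.exists_split_norm_add (hν : IsGroupNorm ν) (hNBP : HasNBP ν) (a b : G) :
    ∃ u : G, ν u + ν (a - u) = ν a ∧ ν (-u) + ν (b - -u) = ν b ∧
      ν (a + b) = ν (a - u) + ν (b - -u) := by
  obtain ⟨f, hf⟩ := hNBP.exists_isOptimalPlan ![a, b, -(a + b)] (by simp [Fin.sum_univ_three])
  have ha : a - f 0 1 = f 0 2 := by
    simpa [Fin.sum_univ_three, hf.diag, sub_eq_iff_eq_add'] using hf.sum_eq 0
  have hb : b - -f 0 1 = f 1 2 := by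
    rw [sub_eq_iff_eq_add', ← hf.antisymm 1 0]
    simpa [Fin.sum_univ_three, hf.diag] using hf.sum_eq 1
  refine ⟨f 0 1, ?_, ?_, ?_⟩
  · simpa [Fin.sum_univ_three, hf.diag, hν.map_zero, ha] using (hf.norm_eq 0).symm
  · simpa [Fin.sum_univ_three, hf.diag, hν.map_zero, hν.map_neg, hf.antisymm 1 0, hb]
      using (hf.norm_eq 1).symm
  · rw [← hν.map_neg, ha, hb]
    simpa [Fin.sum_univ_three, hf.diag, hν.map_zero, hν.map_neg, hf.antisymm 2 0,
      hf.antisymm 2 1] using hf.norm_eq 2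

end

theorem stmt5 {G : Type*} [AddCommGroup G] (ν : G → ℝ) (hν : IsGroupNorm ν)
    (hNBP : HasNBP ν) (g h : G)
    (hg : IsIndecomposable ν g) (hh : IsIndecomposable ν h)
    (hne : AddSubgroup.zmultiples g ≠ AddSubgroup.zmultiples h) :
    ∀ k l : ℤ, ν (k • g + l • h) = ν (k • g) + ν (l • h) := by
  intro k l
  obtain ⟨u, hug, huh, hsum⟩ := hNBP.exists_split_norm_add hν (k • g) (l • h)
  have hkg : k • g ∈ AddSubgroup.zmultiples g := AddSubgroup.zsmul_mem_zmultiples g k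
  have hlh : l • h ∈ AddSubgroup.zmultiples h := AddSubgroup.zsmul_mem_zmultiples h l
  obtain rfl : u = 0 := by
    by_contra hu
    have hu_g := hg.mem_zmultiples_of_norm_add_norm_sub_eq hν hNBP hkg hug
    have hu_h := hh.mem_zmultiples_of_norm_add_norm_sub_eq hν hNBP hlh huh
    refine hne (le_antisymm ?_ ?_)
    · exact hg.zmultiples_le_of_norm_add_norm_sub_eq hν hNBP hh (neg_mem hu_g)
        (neg_ne_zero.2 hu) hlh huh
    · exact hh.zmultiples_le_of_norm_add_norm_sub_eq hν hNBP hg (neg_mem_iff.1 hu_h) hu hkg hug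
  simpa using hsum
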